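/- arXiv:1207.6377 — 2 statements merged into one kernel-verified Lean document; each statement's English description precedes it below -/
import Mathlib

section
/- Let X be a Hausdorff space which is a continuous image of some compact linearly ordered topological space. Then there exist a compact linearly ordered topological space K and a continuous surjection f : K → X such that: (1) for every k ∈ K, χ(k, K) ≤ χ(f(k), X), and hence χ(K) ≤ χ(X); and (2) c(K) = c(X), d(K) = d(X), and w(K) = w(X). -/
universe u

open Set Topology

/-- The character of a space `X` at a point `x`: the least cardinality of a
neighborhood base of `X` at `x`. -/
noncomputable def nhdsChar (X : Type u) [TopologicalSpace X] (x : X) : Cardinal.{u} :=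
  sInf { c | ∃ B : Set (Set X), Cardinal.mk B = c ∧ (∀ U ∈ B, U ∈ nhds x) ∧
      ∀ V ∈ nhds x, ∃ U ∈ B, U ⊆ V }

/-- The character of a space: `χ(X) = sup_{x ∈ X} χ(x, X)`. -/
noncomputable def spaceChar (X : Type u) [TopologicalSpace X] : Cardinal.{u} :=
  ⨆ x : X, nhdsChar X x

/-- The cellularity of a space: the supremum of cardinalities of pairwise disjoint
families of nonempty open subsets. -/
noncomputable def cellularity (X : Type u) [TopologicalSpace X] : Cardinal.{u} :=
  sSup { c | ∃ 𝒰 : Set (Set X), Cardinal.mk 𝒰 = c ∧ (∀ U ∈ 𝒰, IsOpen U ∧ U.Nonempty) ∧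
      𝒰.PairwiseDisjoint id }

/-- The density of a space: the least cardinality of a dense subset. -/
noncomputable def density (X : Type u) [TopologicalSpace X] : Cardinal.{u} :=
  sInf { c | ∃ D : Set X, Cardinal.mk D = c ∧ Dense D }

/-- The weight of a space: the least cardinality of a base for the topology. -/
noncomputable def weight (X : Type u) [TopologicalSpace X] : Cardinal.{u} :=
  sInf { c | ∃ B : Set (Set X), Cardinal.mk B = c ∧ TopologicalSpace.IsTopologicalBasis B }

/-- A surjective map is irreducible if no proper closed subset maps onto the codomain. -/
def IsIrreducibleMap {K : Type*} {X : Type*} [TopologicalSpace K] [TopologicalSpace X]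
    (f : K → X) : Prop :=
  Function.Surjective f ∧ ∀ A : Set K, IsClosed A → A ≠ univ → f '' A ≠ univ

/-- `C` is an order component of `A`: a maximal convex subset of `A`. -/
def IsOrderComponent {K : Type*} [LinearOrder K] (A C : Set K) : Prop :=
  C ⊆ A ∧ C.OrdConnected ∧ ∀ C' : Set K, C ⊆ C' → C' ⊆ A → C'.OrdConnected → C' = C

/-- A map from a linearly ordered set is order-light if every order component of every
fiber is a singleton. -/
def OrderLight {K : Type*} {X : Type*} [LinearOrder K] (f : K → X) : Prop :=
  ∀ x : X, ∀ C : Set K, IsOrderComponent (f ⁻¹' {x}) C → ∃ k, C = {k}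

/-- The countable chain condition: every pairwise disjoint family of nonempty open sets
is countable. -/
def CCC (X : Type*) [TopologicalSpace X] : Prop :=
  ∀ 𝒰 : Set (Set X), (∀ U ∈ 𝒰, IsOpen U ∧ U.Nonempty) → 𝒰.PairwiseDisjoint id → 𝒰.Countable

/-- A space is non-archimedean if it has a base any two members of which are either
disjoint or comparable by inclusion. -/
def NonArchimedean (X : Type*) [TopologicalSpace X] : Prop :=
  ∃ B : Set (Set X), TopologicalSpace.IsTopologicalBasis B ∧
    ∀ U ∈ B, ∀ V ∈ B, Disjoint U V ∨ U ⊆ V ∨ V ⊆ U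

/-- A space is perfectly normal if it is normal and every closed set is a Gδ-set. -/
def PerfNormal (X : Type*) [TopologicalSpace X] : Prop :=
  NormalSpace X ∧ ∀ A : Set X, IsClosed A → IsGδ A

/-- `X` is a continuous image of some compact linearly ordered topological space
(a linearly ordered set equipped with its order topology). -/
def ContinuousImageOfCompactLOTS (X : Type u) [TopologicalSpace X] : Prop :=
  ∃ (K : Type u) (lo : LinearOrder K) (tK : TopologicalSpace K),
    letI := lo; letI := tK;
    OrderTopology K ∧ CompactSpace K ∧ ∃ f : K → X, Continuous f ∧ Function.Surjective f

/-- A closed set `A` is a strong T-set: the boundary of each connected component of the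
complement consists of exactly two points, and each such component is homeomorphic to the
open unit interval `(0,1)`. -/
def IsStrongTSet {Y : Type*} [TopologicalSpace Y] (A : Set Y) : Prop :=
  IsClosed A ∧ ∀ x ∈ Aᶜ,
    (∃ a b : Y, a ≠ b ∧ frontier (connectedComponentIn Aᶜ x) = {a, b}) ∧
    Nonempty (↥(connectedComponentIn Aᶜ x) ≃ₜ ↥(Ioo (0:ℝ) 1))

/-- Souslin's Hypothesis: every ccc LOTS is separable. -/
def SouslinHypothesis : Prop :=
  ∀ (L : Type u) (lo : LinearOrder L) (tL : TopologicalSpace L),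
    letI := lo; letI := tL;
    OrderTopology L → CCC L → TopologicalSpace.SeparableSpace L


/-!
Let `g : L → X` be a continuous surjection from a compact LOTS. Restrict it to a minimal closed set
`E` with `g '' E = X`: the restriction is irreducible, and `E`, being compact, carries its order
topology. Each order component of a fibre of `g|E` is a closed interval; collapsing it to its
maximum yields a compact LOTS `K` and an order-light irreducible map `f : K → X`.

Irreducibility lets `U ↦ X \ f (K \ U)` and `V ↦ f ⁻¹' V` carry disjoint open families and dense
sets in both directions, so `c` and `d` agree. Order-lightness gives the character bound: the order
components at `k` of the preimages of a neighbourhood base at `f k` shrink to `{k}`. It also bounds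
the number of jumps `a ⋖ b` of `K` by `w(X) · c(K)`, since a jump is separated by a basic open set
of `X` and the jumps entering a fixed open set start distinct components of it. A dense set together
with the jump endpoints generates the order topology, whence `w(K) ≤ w(X)`; the reverse inequality
holds for every continuous image of a compact space.
-/

open Function Cardinal TopologicalSpace Topology Interval

section OrderTopology

variable {α : Type*} [LinearOrder α] [TopologicalSpace α]

theorem Set.OrdConnected.closure [OrderClosedTopology α] {s : Set α} (hs : s.OrdConnected) :
    (_root_.closure s).OrdConnected := by
  refine ⟨fun x hx y hy z hz => by_contra fun hzs => ?_⟩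
  have hside : s ⊆ Ici z ∨ s ⊆ Iic z := by
    by_contra! h
    obtain ⟨⟨c, hc, hcz⟩, ⟨d, hd, hdz⟩⟩ := And.intro (not_subset.1 h.1) (not_subset.1 h.2)
    exact hzs (subset_closure (hs.out hc hd ⟨(not_le.1 hcz).le, (not_le.1 hdz).le⟩))
  rcases hside with h | h
  · exact hzs (le_antisymm hz.1 (isClosed_Ici.closure_subset_iff.2 h hx) ▸ hx)
  · exact hzs ((le_antisymm (isClosed_Iic.closure_subset_iff.2 h hy) hz.2).symm ▸ hy)

theorem isClosed_ordConnectedComponent [OrderClosedTopology α] {s : Set α} (hs : IsClosed s)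
    (a : α) : IsClosed (ordConnectedComponent s a) := by
  by_cases ha : a ∈ s
  · refine closure_subset_iff_isClosed.1 ?_
    have := (inferInstance : (ordConnectedComponent s a).OrdConnected).closure
    exact subset_ordConnectedComponent (subset_closure (self_mem_ordConnectedComponent.2 ha))
      (hs.closure_subset_iff.2 ordConnectedComponent_subset)
  · simp [ordConnectedComponent_eq_empty.2 ha]

theorem isOpen_ordConnectedComponent [OrderTopology α] {s : Set α} (hs : IsOpen s) (a : α) :
    IsOpen (ordConnectedComponent s a) :=
  isOpen_iff_mem_nhds.2 fun _ hz => (ordConnectedComponent_eq hz).symm ▸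
    ordConnectedComponent_mem_nhds.2 (hs.mem_nhds (ordConnectedComponent_subset hz))

theorem OrderTopology.of_le_of_compactSpace [CompactSpace α]
    (h : ‹TopologicalSpace α› ≤ Preorder.topology α) : OrderTopology α := by
  have : @T2Space α (Preorder.topology α) :=
    let _ := Preorder.topology α
    have : OrderTopology α := ⟨rfl⟩
    inferInstance
  have hemb := @Continuous.isClosedEmbedding α α _ (Preorder.topology α) _ this id
    (continuous_id_of_le h) injective_id
  have hind := @IsEmbedding.toIsInducing α α _ (Preorder.topology α) id
    (@IsClosedEmbedding.toIsEmbedding α α _ (Preorder.topology α) id hemb)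
  exact ⟨(@IsInducing.eq_induced α α _ (Preorder.topology α) id hind).trans
    (@induced_id _ (Preorder.topology α))⟩

instance Set.orderTopology_of_compactSpace [OrderTopology α] {s : Set α} [CompactSpace s] :
    OrderTopology s :=
  .of_le_of_compactSpace (induced_topology_le_preorder Subtype.coe_lt_coe)

theorem Monotone.continuous_of_surjective_of_isClosed_fiber [OrderTopology α] [CompactSpace α]
    {β : Type*} [LinearOrder β] [TopologicalSpace β] [OrderTopology β] {q : α → β}
    (hq : Monotone q) (hqs : Surjective q)
    (hfib : ∀ b, IsClosed (q ⁻¹' {b})) : Continuous q := by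
  refine OrderTopology.continuous_iff.2 fun b => ?_
  obtain ⟨a, rfl⟩ := hqs b
  have hne : (q ⁻¹' {q a}).Nonempty := ⟨a, rfl⟩
  obtain ⟨m, hm, hmax⟩ := (hfib _).isCompact.exists_isGreatest hne
  obtain ⟨l, hl, hmin⟩ := (hfib _).isCompact.exists_isLeast hne
  have hIoi : q ⁻¹' Ioi (q a) = Ioi m := by
    ext z
    refine ⟨fun hz => lt_of_not_ge fun hzm => (hq hzm).not_gt (hm ▸ hz), fun hz => ?_⟩
    exact lt_of_le_of_ne (hm ▸ hq hz.le) fun h => hz.not_ge (hmax h.symm)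
  have hIio : q ⁻¹' Iio (q a) = Iio l := by
    ext z
    refine ⟨fun hz => lt_of_not_ge fun hlz => (hq hlz).not_gt (hl ▸ hz), fun hz => ?_⟩
    exact lt_of_le_of_ne (hl ▸ hq hz.le) fun h => hz.not_ge (hmin h)
  exact ⟨hIoi ▸ isOpen_Ioi, hIio ▸ isOpen_Iio⟩

end OrderTopology

section OrderLight

variable {K X : Type*} [LinearOrder K] {f : K → X}

theorem OrderLight.eq_of_uIcc_subset (hf : OrderLight f) {a b : K}
    (h : [[a, b]] ⊆ f ⁻¹' {f a}) : b = a := by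
  have hC : IsOrderComponent (f ⁻¹' {f a}) (ordConnectedComponent (f ⁻¹' {f a}) a) :=
    ⟨ordConnectedComponent_subset, inferInstance, fun C hC hCf _ =>
      (subset_ordConnectedComponent (hC (self_mem_ordConnectedComponent.2 rfl)) hCf).antisymm hC⟩
  obtain ⟨k, hk⟩ := hf _ _ hC
  have ha : a ∈ ordConnectedComponent (f ⁻¹' {f a}) a := self_mem_ordConnectedComponent.2 rfl
  have hb : b ∈ ordConnectedComponent (f ⁻¹' {f a}) a := h
  rw [hk] at ha hb
  exact hb.trans ha.symm

theorem orderLight_of_forall_uIcc_subset (hs : Surjective f)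
    (h : ∀ a b, [[a, b]] ⊆ f ⁻¹' {f a} → b = a) : OrderLight f := by
  rintro x C ⟨hCf, hCo, hCmax⟩
  obtain ⟨a, rfl⟩ := hs x
  obtain ⟨c, hc⟩ : C.Nonempty := nonempty_iff_ne_empty.2 fun hC => singleton_ne_empty a
    ((hCmax {a} (hC ▸ empty_subset _) (singleton_subset_iff.2 rfl) ordConnected_singleton).trans hC)
  have hfc : f c = f a := hCf hc
  refine ⟨c, Subset.antisymm (fun d hd => h c d ?_) (singleton_subset_iff.2 hc)⟩
  rw [hfc]
  exact subset_ordConnectedComponent hc hCf hd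

end OrderLight

theorem exists_isIrreducibleMap_domRestrict {L X : Type u} [TopologicalSpace L]
    [TopologicalSpace X] [CompactSpace L] [T1Space X] {g : L → X} (hg : Continuous g)
    (hgs : Surjective g) : ∃ E : Set L, CompactSpace E ∧ IsIrreducibleMap (E.domRestrict g) := by
  obtain ⟨E, hE, hEs, hEmin⟩ := exists_compact_surjective_zorn_subset hg hgs
  refine ⟨E, hE, fun x => ?_, fun A hA hAne => hEmin A hAne hA⟩
  obtain ⟨k, hk, rfl⟩ : x ∈ g '' E := hEs ▸ mem_univ x
  exact ⟨⟨k, hk⟩, rfl⟩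

section Irreducible

variable {K X : Type*} [TopologicalSpace K] [TopologicalSpace X] {f : K → X}

theorem IsIrreducibleMap.of_comp {α : Type*} [TopologicalSpace α] {q : α → K} (hq : Continuous q)
    (hqs : Surjective q) (h : IsIrreducibleMap (f ∘ q)) : IsIrreducibleMap f := by
  refine ⟨h.1.of_comp, fun A hA hAne hfA => h.2 (q ⁻¹' A) (hA.preimage hq) ?_ ?_⟩
  · exact fun hqA => hAne (by rw [← hqs.image_preimage A, hqA, image_univ, hqs.range_eq])
  · rw [image_comp, hqs.image_preimage, hfA]

theorem IsIrreducibleMap.kernImage_nonempty (hf : IsIrreducibleMap f) {U : Set K} (hU : IsOpen U)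
    (hne : U.Nonempty) : (kernImage f U).Nonempty := by
  rw [kernImage_eq_compl, nonempty_compl]
  exact hf.2 Uᶜ hU.isClosed_compl (compl_ne_univ.2 hne)

theorem IsIrreducibleMap.dense_of_dense_image (hf : IsIrreducibleMap f) (hc : IsClosedMap f)
    {S : Set K} (hS : Dense (f '' S)) : Dense S := by
  by_contra hS'
  refine hf.2 _ isClosed_closure (mt dense_iff_closure_eq.2 hS') (eq_univ_of_univ_subset ?_)
  rw [← hS.closure_eq]
  exact closure_minimal (image_mono subset_closure) (hc _ isClosed_closure)

end Irreducible

section Collapse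

variable {α X : Type u} [LinearOrder α] [TopologicalSpace α] [OrderTopology α] [CompactSpace α]
  [TopologicalSpace X] [T1Space X] {g : α → X}

theorem exists_monotone_eq_iff_uIcc_subset_fiber (hg : Continuous g) :
    ∃ σ : α → α, Monotone σ ∧ (∀ a, g (σ a) = g a) ∧
      ∀ a b, σ a = σ b ↔ [[a, b]] ⊆ g ⁻¹' {g a} := by
  set C : α → Set α := fun a => ordConnectedComponent (g ⁻¹' {g a}) a
  have hgC : ∀ {a b}, b ∈ C a → g b = g a := fun hb =>
    ordConnectedComponent_subset (s := g ⁻¹' {g _}) hb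
  have hC_eq : ∀ {a b}, b ∈ C a → C b = C a := fun {a b} hb => by
    simp only [C, hgC hb]
    exact (ordConnectedComponent_eq hb).symm
  have hself : ∀ a, a ∈ C a := fun a => self_mem_ordConnectedComponent.2 rfl
  have hmax : ∀ a, ∃ m, IsGreatest (C a) m := fun a =>
    (isClosed_ordConnectedComponent (isClosed_singleton.preimage hg) a).isCompact.exists_isGreatest
      ⟨a, hself a⟩
  choose σ hσ using hmax
  have hσ_eq : ∀ {a b}, b ∈ C a → σ b = σ a := fun {a b} hb =>
    (hσ b).unique (hC_eq hb ▸ hσ a)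
  refine ⟨σ, fun a b hab => ?_, fun a => hgC (hσ a).1,
    fun a b => ⟨fun h => ?_, fun h => (hσ_eq h).symm⟩⟩
  · by_cases hb : b ∈ C a
    · exact (hσ_eq hb).ge
    · have hσb : σ a < b := lt_of_not_ge fun hbσ =>
        hb ((inferInstance : (C a).OrdConnected).out (hself a) (hσ a).1 ⟨hab, hbσ⟩)
      exact hσb.le.trans ((hσ b).2 (hself b))
  · have : C a = C b := by rw [← hC_eq (hσ a).1, ← hC_eq (hσ b).1, h]
    exact (this ▸ hself b : b ∈ C a)

theorem exists_orderLight_factorization (hg : Continuous g) (hgs : Surjective g) :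
    ∃ (K : Type u) (_ : LinearOrder K) (_ : TopologicalSpace K), OrderTopology K ∧
      ∃ (q : α → K) (f : K → X), Continuous q ∧ Surjective q ∧ Continuous f ∧ f ∘ q = g ∧
        OrderLight f := by
  obtain ⟨σ, hσ, hgσ, hσ_eq⟩ := exists_monotone_eq_iff_uIcc_subset_fiber hg
  -- `range σ` carries its own order topology, not the subspace topology of `α`
  let _ : TopologicalSpace (range σ) := Preorder.topology _
  have : OrderTopology (range σ) := ⟨rfl⟩
  set q : α → range σ := rangeFactorization σ
  have hqs : Surjective q := rangeFactorization_surjective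
  have hq_mono : Monotone q := fun a b hab => Subtype.coe_le_coe.1 (hσ hab)
  have hq_eq : ∀ a b, q a = q b ↔ [[a, b]] ⊆ g ⁻¹' {g a} := fun a b =>
    Subtype.ext_iff.trans (hσ_eq a b)
  have hq : Continuous q := by
    refine hq_mono.continuous_of_surjective_of_isClosed_fiber hqs fun k => ?_
    obtain ⟨a, rfl⟩ := hqs k
    have : q ⁻¹' {q a} = ordConnectedComponent (g ⁻¹' {g a}) a := by
      ext b; exact (eq_comm.trans (hq_eq a b))
    exact this ▸ isClosed_ordConnectedComponent (isClosed_singleton.preimage hg) a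
  set f : range σ → X := fun k => g k
  have hfq : f ∘ q = g := funext hgσ
  refine ⟨range σ, inferInstance, inferInstance, inferInstance, q, f, hq, hqs,
    (IsQuotientMap.of_surjective_continuous hqs hq).continuous_iff.2 (hfq ▸ hg), hfq,
    orderLight_of_forall_uIcc_subset (hfq ▸ hgs).of_comp ?_⟩
  intro x y hxy
  obtain ⟨⟨a, rfl⟩, ⟨b, rfl⟩⟩ := And.intro (hqs x) (hqs y)
  refine ((hq_eq a b).2 fun z hz => ?_).symm
  show g z = g a
  rw [← hgσ z, ← hgσ a]
  exact hxy (hq_mono.mapsTo_uIcc hz)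

end Collapse

section CardinalFunctions

variable {Y Z : Type u} [TopologicalSpace Y] [TopologicalSpace Z]

theorem nhdsChar_le_mk {y : Y} {B : Set (Set Y)} (hB : ∀ U ∈ B, U ∈ 𝓝 y)
    (hB' : ∀ V ∈ 𝓝 y, ∃ U ∈ B, U ⊆ V) : nhdsChar Y y ≤ #B :=
  csInf_le' ⟨B, rfl, hB, hB'⟩

theorem exists_mk_eq_nhdsChar (y : Y) :
    ∃ B : Set (Set Y), #B = nhdsChar Y y ∧ (∀ U ∈ B, U ∈ 𝓝 y) ∧ ∀ V ∈ 𝓝 y, ∃ U ∈ B, U ⊆ V :=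
  csInf_mem (s := {c | ∃ B : Set (Set Y), #B = c ∧ _}) ⟨_, (𝓝 y).sets, rfl, fun _ h => h,
    fun V hV => ⟨V, hV, subset_rfl⟩⟩

theorem spaceChar_le_of_forall {f : Y → Z} (h : ∀ y, nhdsChar Y y ≤ nhdsChar Z (f y)) :
    spaceChar Y ≤ spaceChar Z :=
  ciSup_le' fun y => (h y).trans (le_ciSup bddAbove_of_small (f y))

theorem density_le_mk {D : Set Y} (hD : Dense D) : density Y ≤ #D :=
  csInf_le' ⟨D, rfl, hD⟩

theorem exists_dense_mk_eq_density (Y : Type u) [TopologicalSpace Y] :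
    ∃ D : Set Y, #D = density Y ∧ Dense D :=
  csInf_mem (s := {c | ∃ D : Set Y, #D = c ∧ Dense D}) ⟨_, univ, rfl, dense_univ⟩

theorem weight_le_mk {B : Set (Set Y)} (hB : IsTopologicalBasis B) : weight Y ≤ #B :=
  csInf_le' ⟨B, rfl, hB⟩

theorem exists_isTopologicalBasis_mk_eq_weight (Y : Type u) [TopologicalSpace Y] :
    ∃ B : Set (Set Y), #B = weight Y ∧ IsTopologicalBasis B :=
  csInf_mem (s := {c | ∃ B : Set (Set Y), #B = c ∧ IsTopologicalBasis B})
    ⟨_, {U | IsOpen U}, rfl, isTopologicalBasis_opens⟩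

theorem mk_le_cellularity {𝒰 : Set (Set Y)} (h𝒰 : ∀ U ∈ 𝒰, IsOpen U ∧ U.Nonempty)
    (hdisj : 𝒰.PairwiseDisjoint id) : #𝒰 ≤ cellularity Y :=
  le_csSup ⟨#(Set Y), by rintro _ ⟨𝒱, rfl, -, -⟩; exact mk_set_le 𝒱⟩ ⟨𝒰, rfl, h𝒰, hdisj⟩

theorem cellularity_le {c : Cardinal.{u}} (h : ∀ 𝒰 : Set (Set Y),
    (∀ U ∈ 𝒰, IsOpen U ∧ U.Nonempty) → 𝒰.PairwiseDisjoint id → #𝒰 ≤ c) : cellularity Y ≤ c :=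
  csSup_le ⟨0, ∅, by simp, by simp, by simp⟩ fun _ ⟨𝒰, h𝒰, h₁, h₂⟩ => h𝒰 ▸ h 𝒰 h₁ h₂

theorem mk_setOf_finite_subset_le {α : Type u} (S : Set α) :
    #{F : Set α | F.Finite ∧ F ⊆ S} ≤ max ℵ₀ #S := by
  refine (mk_le_mk_of_subset (t := range fun l : List S => Subtype.val '' {x | x ∈ l})
    fun F hF => ?_).trans (mk_range_le.trans (mk_list_le_max S))
  obtain ⟨s, hs⟩ := (hF.1.preimage Subtype.val_injective.injOn).exists_finset_coe
  refine ⟨s.toList, ?_⟩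
  simp only [Finset.mem_toList, ← Finset.mem_coe, hs, ofPred_mem_eq, Subtype.image_preimage_coe,
    inter_eq_right.2 hF.2]

theorem weight_le_of_eq_generateFrom {S : Set (Set Y)}
    (h : ‹TopologicalSpace Y› = generateFrom S) : weight Y ≤ max ℵ₀ #S :=
  (weight_le_mk (isTopologicalBasis_of_subbasis h)).trans
    (mk_image_le.trans (mk_setOf_finite_subset_le S))

theorem TopologicalSpace.IsTopologicalBasis.infinite [T0Space Y] [Infinite Y] {B : Set (Set Y)}
    (hB : IsTopologicalBasis B) : B.Infinite := by
  intro hfin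
  have hmem : ∀ {y z : Y}, {b ∈ B | y ∈ b} = {b ∈ B | z ∈ b} → ∀ U, IsOpen U → y ∈ U → z ∈ U := by
    intro y z hyz U hU hyU
    obtain ⟨b, hb, hyb, hbU⟩ := hB.exists_subset_of_mem_open hyU hU
    have hb' : b ∈ {b ∈ B | z ∈ b} := hyz ▸ (show b ∈ {b ∈ B | y ∈ b} from ⟨hb, hyb⟩)
    exact hbU hb'.2
  have hinj : Injective fun y : Y => (⟨{b ∈ B | y ∈ b}, sep_subset _ _⟩ : {F // F ⊆ B}) :=
    fun y z hyz => (inseparable_iff_forall_isOpen.2 fun U hU =>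
      ⟨hmem (congrArg Subtype.val hyz) U hU, hmem (congrArg Subtype.val hyz).symm U hU⟩).eq
  have : Finite {F // F ⊆ B} := hfin.finite_subsets.to_subtype
  exact not_finite_iff_infinite.2 ‹Infinite Y› (Finite.of_injective _ hinj)

theorem aleph0_le_weight [T0Space Y] [Infinite Y] : ℵ₀ ≤ weight Y := by
  obtain ⟨B, hBcard, hB⟩ := exists_isTopologicalBasis_mk_eq_weight Y
  exact hBcard ▸ infinite_iff.1 hB.infinite.to_subtype

theorem density_le_weight : density Y ≤ weight Y := by
  obtain ⟨B, hBcard, hB⟩ := exists_isTopologicalBasis_mk_eq_weight Y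
  have hpt : ∀ b : {b ∈ B | b.Nonempty}, ∃ y, y ∈ (b : Set Y) := fun b => b.2.2
  choose p hp using hpt
  refine (density_le_mk (D := range p) ?_).trans (mk_range_le.trans ?_)
  · refine hB.dense_iff.2 fun b hb hne => ⟨p ⟨b, hb, hne⟩, hp ⟨b, hb, hne⟩, mem_range_self _⟩
  · exact hBcard ▸ mk_le_mk_of_subset (sep_subset _ _)

theorem cellularity_le_weight : cellularity Y ≤ weight Y := by
  obtain ⟨B, hBcard, hB⟩ := exists_isTopologicalBasis_mk_eq_weight Y
  refine cellularity_le fun 𝒰 h𝒰 hdisj => hBcard ▸ ?_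
  have hsub : ∀ U : 𝒰, ∃ b : B, (b : Set Y).Nonempty ∧ (b : Set Y) ⊆ U := by
    rintro ⟨U, hU⟩
    obtain ⟨y, hy⟩ := (h𝒰 U hU).2
    obtain ⟨b, hb, hyb, hbU⟩ := hB.exists_subset_of_mem_open hy (h𝒰 U hU).1
    exact ⟨⟨b, hb⟩, ⟨y, hyb⟩, hbU⟩
  choose m hm_ne hm_sub using hsub
  refine mk_le_of_injective (f := m) fun U V hUV => Subtype.ext (by_contra fun hne => ?_)
  obtain ⟨y, hy⟩ := hm_ne U
  exact disjoint_left.1 (hdisj U.2 V.2 hne) (hm_sub U hy) (hm_sub V (hUV ▸ hy))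

end CardinalFunctions

section Transfer

variable {K X : Type u} [TopologicalSpace K] [TopologicalSpace X] {f : K → X}

theorem cellularity_le_of_map {φ : Set K → Set X}
    (hφ : ∀ U, IsOpen U → U.Nonempty → IsOpen (φ U) ∧ (φ U).Nonempty)
    (hφ_disj : ∀ U V, Disjoint U V → Disjoint (φ U) (φ V)) : cellularity K ≤ cellularity X := by
  refine cellularity_le fun 𝒰 h𝒰 hdisj => ?_
  have hinj : InjOn φ 𝒰 := fun U hU V hV hUV => by_contra fun hne => by
    obtain ⟨x, hx⟩ := (hφ U (h𝒰 U hU).1 (h𝒰 U hU).2).2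
    exact disjoint_left.1 (hφ_disj U V (hdisj hU hV hne)) hx (hUV ▸ hx)
  rw [← mk_image_eq_of_injOn φ 𝒰 hinj]
  refine mk_le_cellularity (forall_mem_image.2 fun U hU => hφ U (h𝒰 U hU).1 (h𝒰 U hU).2) ?_
  rintro _ ⟨U, hU, rfl⟩ _ ⟨V, hV, rfl⟩ hne
  exact hφ_disj U V (hdisj hU hV fun h => hne (h ▸ rfl))

theorem cellularity_le_of_surjective (hf : Continuous f) (hs : Surjective f) :
    cellularity X ≤ cellularity K :=
  cellularity_le_of_map (fun _ hU hne => ⟨hU.preimage hf, hs.nonempty_preimage.2 hne⟩)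
    fun _ _ h => h.preimage f

theorem cellularity_le_of_isIrreducibleMap (hf : IsIrreducibleMap f) (hc : IsClosedMap f) :
    cellularity K ≤ cellularity X :=
  cellularity_le_of_map (φ := kernImage f)
    (fun _ hU hne => ⟨isClosedMap_iff_kernImage.1 hc hU, hf.kernImage_nonempty hU hne⟩)
    fun U V h => disjoint_left.2 fun x hU hV => by
      obtain ⟨k, rfl⟩ := hf.1 x
      exact disjoint_left.1 h (hU rfl) (hV rfl)

theorem density_le_of_surjective (hf : Continuous f) (hs : Surjective f) :
    density X ≤ density K := by
  obtain ⟨D, hDcard, hD⟩ := exists_dense_mk_eq_density K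
  exact (density_le_mk (hs.denseRange.dense_image hf hD)).trans (hDcard ▸ mk_image_le)

theorem density_le_of_isIrreducibleMap (hf : IsIrreducibleMap f) (hc : IsClosedMap f) :
    density K ≤ density X := by
  obtain ⟨D, hDcard, hD⟩ := exists_dense_mk_eq_density X
  have hfD : f '' (surjInv hf.1 '' D) = D := by
    rw [image_image, funext (surjInv_eq hf.1), image_id']
  exact (density_le_mk (hf.dense_of_dense_image hc (hfD ▸ hD))).trans (hDcard ▸ mk_image_le)

end Transfer

section Character

variable {K X : Type u} [LinearOrder K] [TopologicalSpace K] [OrderTopology K] [CompactSpace K]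
  [TopologicalSpace X] [T2Space X]

theorem eq_of_forall_mem_closure {x y : X} {B : Set (Set X)} (hB : ∀ V ∈ 𝓝 x, ∃ U ∈ B, U ⊆ V)
    (hy : ∀ U ∈ B, y ∈ closure U) : y = x := by
  by_contra hyx
  obtain ⟨u, v, hu, hv, huv⟩ := t2_separation_nhds (Ne.symm hyx)
  obtain ⟨U, hU, hUu⟩ := hB u hu
  obtain ⟨z, hzv, hzU⟩ := mem_closure_iff_nhds.1 (hy U hU) v hv
  exact disjoint_left.1 huv (hUu hzU) hzv

theorem nhdsChar_le_of_orderLight {f : K → X} (hf : Continuous f) (hl : OrderLight f) (k : K) :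
    nhdsChar K k ≤ nhdsChar X (f k) := by
  obtain ⟨B, hBcard, hB, hB'⟩ := exists_mk_eq_nhdsChar (f k)
  set C : Set X → Set K := fun V => ordConnectedComponent (f ⁻¹' V) k
  refine hBcard ▸ (nhdsChar_le_mk (B := C '' B) (forall_mem_image.2 fun V hV =>
    ordConnectedComponent_mem_nhds.2 (hf.continuousAt (hB V hV))) fun N hN => ?_).trans mk_image_le
  obtain ⟨W, hWN, hWo, hkW⟩ := mem_nhds_iff.1 hN
  -- The closed convex sets `closure (C V)` shrink to `{k}` by lightness, so by compactness one
  -- of them lies in `W`.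
  have hC_mono : ∀ {V V'}, V ⊆ V' → C V ⊆ C V' := fun h _ hz => hz.trans (preimage_mono h)
  have hdir : Directed (· ⊇ ·) fun V : B => closure (C V) := fun V₁ V₂ => by
    obtain ⟨V, hV, hV₁₂⟩ := hB' _ (Filter.inter_mem (hB V₁ V₁.2) (hB V₂ V₂.2))
    exact ⟨⟨V, hV⟩, closure_mono (hC_mono (hV₁₂.trans inter_subset_left)),
      closure_mono (hC_mono (hV₁₂.trans inter_subset_right))⟩
  have hfC : ∀ V, f '' closure (C V) ⊆ closure V := fun V =>
    (image_closure_subset_closure_image hf).trans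
      (closure_mono (image_subset_iff.2 ordConnectedComponent_subset))
  set T := ⋂ V : B, closure (C V)
  have hT : T.OrdConnected :=
    ordConnected_iInter fun V => (inferInstance : (C V).OrdConnected).closure
  have hkT : k ∈ T := mem_iInter.2 fun V => subset_closure <|
    self_mem_ordConnectedComponent.2 (mem_of_mem_nhds (hB V V.2) : f k ∈ (V : Set X))
  have hfT : ∀ z ∈ T, f z = f k := fun z hz =>
    eq_of_forall_mem_closure hB' fun V hV => hfC V ⟨z, mem_iInter.1 hz ⟨V, hV⟩, rfl⟩
  have hTW : Wᶜ ∩ T = ∅ := eq_empty_iff_forall_notMem.2 fun z ⟨hzW, hzT⟩ =>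
    hzW (hl.eq_of_uIcc_subset (fun w hw => hfT w (hT.uIcc_subset hkT hzT hw)) ▸ hkW)
  have : Nonempty B := let ⟨V, hV, _⟩ := hB' univ Filter.univ_mem; ⟨⟨V, hV⟩⟩
  obtain ⟨V, hV⟩ := hWo.isClosed_compl.isCompact.elim_directed_family_closed _
    (fun _ => isClosed_closure) hTW hdir
  exact ⟨C V, mem_image_of_mem C V.2, fun z hz => hWN <| by_contra fun hzW =>
    eq_empty_iff_forall_notMem.1 hV z ⟨hzW, subset_closure hz⟩⟩

end Character

section Weight

theorem weight_le_max_aleph0_of_surjective {K X : Type u} [TopologicalSpace K] [TopologicalSpace X]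
    [CompactSpace K] [T2Space X] {f : K → X} (hf : Continuous f) (hs : Surjective f) :
    weight X ≤ max ℵ₀ (weight K) := by
  obtain ⟨B, hBcard, hB⟩ := exists_isTopologicalBasis_mk_eq_weight K
  set 𝒮 := {F : Set (Set K) | F.Finite ∧ F ⊆ B}
  -- Over a point `x ∈ u`, the compact fibre is covered by finitely many basic sets inside
  -- `f ⁻¹' u`; the points whose whole fibre lies in that cover form a basic neighbourhood of `x`.
  have hbasis : IsTopologicalBasis ((fun F => kernImage f (⋃₀ F)) '' 𝒮) := by
    refine isTopologicalBasis_of_isOpen_of_nhds ?_ fun x u hxu hu => ?_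
    · rintro _ ⟨F, hF, rfl⟩
      exact isClosedMap_iff_kernImage.1 hf.isClosedMap
        (isOpen_sUnion fun b hb => hB.isOpen (hF.2 hb))
    · have hcover : f ⁻¹' {x} ⊆ ⋃ b ∈ {b ∈ B | b ⊆ f ⁻¹' u}, id b := fun k hk => by
        obtain ⟨b, hb, hkb, hbu⟩ := hB.exists_subset_of_mem_open
          (show f k ∈ u from (hk : f k = x) ▸ hxu) (hu.preimage hf)
        exact mem_biUnion ⟨hb, hbu⟩ hkb
      obtain ⟨F, hFB, hF, hFcover⟩ := (isClosed_singleton.preimage hf).isCompact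
        |>.elim_finite_subcover_image (fun b hb => hB.isOpen hb.1) hcover
      refine ⟨_, ⟨F, ⟨hF, fun b hb => (hFB hb).1⟩, rfl⟩, fun k hk => ?_, fun y hy => ?_⟩
      · simpa only [sUnion_eq_biUnion, id] using hFcover hk
      · obtain ⟨k, rfl⟩ := hs y
        obtain ⟨b, hbF, hkb⟩ := hy rfl
        exact (hFB hbF).2 hkb
  calc weight X ≤ #𝒮 := (weight_le_mk hbasis).trans mk_image_le
    _ ≤ max ℵ₀ (weight K) := hBcard ▸ mk_setOf_finite_subset_le B

variable {K : Type u} [LinearOrder K] [TopologicalSpace K] [OrderTopology K]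

theorem OrderTopology.eq_generateFrom_of_exists_mem {E : Set K}
    (hE : ∀ a b, a < b → ∃ e ∈ E, a ≤ e ∧ e < b) (hE' : ∀ a b, a < b → ∃ e ∈ E, a < e ∧ e ≤ b) :
    ‹TopologicalSpace K› = generateFrom (Ioi '' E ∪ Iio '' E) := by
  refine (OrderTopology.topology_eq_generate_intervals (α := K)).trans ?_
  refine le_antisymm (generateFrom_anti ?_) (le_generateFrom ?_)
  · simp only [union_subset_iff, image_subset_iff]
    exact ⟨fun a _ => ⟨a, .inl rfl⟩, fun a _ => ⟨a, .inr rfl⟩⟩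
  · let _ := generateFrom (Ioi '' E ∪ Iio '' E)
    rintro _ ⟨a, rfl | rfl⟩
    · have : Ioi a = ⋃ e ∈ E ∩ Ici a, Ioi e := by
        ext z
        simp only [mem_Ioi, mem_iUnion, mem_inter_iff, mem_Ici, exists_prop]
        refine ⟨fun h => ?_, fun ⟨e, ⟨_, hae⟩, hez⟩ => hae.trans_lt hez⟩
        obtain ⟨e, he, hae, hez⟩ := hE a z h
        exact ⟨e, ⟨he, hae⟩, hez⟩
      rw [this]
      exact isOpen_biUnion fun e he => .basic _ (.inl (mem_image_of_mem _ he.1))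
    · have : Iio a = ⋃ e ∈ E ∩ Iic a, Iio e := by
        ext z
        simp only [mem_Iio, mem_iUnion, mem_inter_iff, mem_Iic, exists_prop]
        refine ⟨fun h => ?_, fun ⟨e, ⟨_, hea⟩, hze⟩ => hze.trans_le hea⟩
        obtain ⟨e, he, hze, hea⟩ := hE' z a h
        exact ⟨e, ⟨he, hea⟩, hze⟩
      rw [this]
      exact isOpen_biUnion fun e he => .basic _ (.inr (mem_image_of_mem _ he.1))

theorem weight_le_of_density_le_of_mk_covBy_le {κ : Cardinal.{u}} (hκ : ℵ₀ ≤ κ)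
    (hd : density K ≤ κ) (hJ : #{p : K × K | p.1 ⋖ p.2} ≤ κ) : weight K ≤ κ := by
  obtain ⟨D, hDcard, hD⟩ := exists_dense_mk_eq_density K
  set J := {p : K × K | p.1 ⋖ p.2}
  set E := D ∪ Prod.fst '' J ∪ Prod.snd '' J
  have hE : ∀ a b, a < b → ∃ e ∈ E, a ≤ e ∧ e < b := fun a b hab => by
    rcases (Ioo a b).eq_empty_or_nonempty with h | h
    · exact ⟨a, .inl (.inr ⟨(a, b), covBy_iff_Ioo_eq.2 ⟨hab, h⟩, rfl⟩), le_rfl, hab⟩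
    · obtain ⟨e, he, heD⟩ := hD.inter_open_nonempty _ isOpen_Ioo h
      exact ⟨e, .inl (.inl heD), he.1.le, he.2⟩
  have hE' : ∀ a b, a < b → ∃ e ∈ E, a < e ∧ e ≤ b := fun a b hab => by
    rcases (Ioo a b).eq_empty_or_nonempty with h | h
    · exact ⟨b, .inr ⟨(a, b), covBy_iff_Ioo_eq.2 ⟨hab, h⟩, rfl⟩, hab, le_rfl⟩
    · obtain ⟨e, he, heD⟩ := hD.inter_open_nonempty _ isOpen_Ioo h
      exact ⟨e, .inl (.inl heD), he.1, he.2.le⟩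
  have hEcard : #E ≤ κ := (mk_union_le _ _).trans <| add_le_of_le hκ
    ((mk_union_le _ _).trans (add_le_of_le hκ (hDcard ▸ hd) (mk_image_le.trans hJ)))
    (mk_image_le.trans hJ)
  refine (weight_le_of_eq_generateFrom (OrderTopology.eq_generateFrom_of_exists_mem hE hE')).trans
    (max_le hκ ((mk_union_le _ _).trans
      (add_le_of_le hκ (mk_image_le.trans hEcard) (mk_image_le.trans hEcard))))

theorem mk_covBy_mem_le_cellularity {U : Set K} (hU : IsOpen U) :
    #{p : K × K | p.1 ⋖ p.2 ∧ p.1 ∉ U ∧ p.2 ∈ U} ≤ cellularity K := by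
  set J := {p : K × K | p.1 ⋖ p.2 ∧ p.1 ∉ U ∧ p.2 ∈ U}
  set C : K × K → Set K := fun p => ordConnectedComponent U p.2
  have hself : ∀ p ∈ J, p.2 ∈ C p := fun p hp => self_mem_ordConnectedComponent.2 hp.2.2
  -- the right end of a jump into `U` is the least element of its component of `U`
  have hleast : ∀ p ∈ J, ∀ z ∈ C p, p.2 ≤ z := fun p hp z hz => le_of_not_gt fun hzp =>
    hp.2.1 (hz (mem_uIcc.2 (.inr ⟨hp.1.le_of_lt hzp, hp.1.lt.le⟩)))
  have hinj : InjOn C J := fun p hp p' hp' hpp' => by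
    have h₂ : p.2 = p'.2 := le_antisymm (hleast p hp _ (hpp' ▸ hself p' hp'))
      (hleast p' hp' _ (hpp' ▸ hself p hp))
    exact Prod.ext (hp.1.unique_left (h₂ ▸ hp'.1)) h₂
  rw [← mk_image_eq_of_injOn C J hinj]
  refine mk_le_cellularity (forall_mem_image.2 fun p hp =>
    ⟨isOpen_ordConnectedComponent hU _, p.2, hself p hp⟩) ?_
  rintro _ ⟨p, hp, rfl⟩ _ ⟨p', hp', rfl⟩ hne
  refine disjoint_left.2 fun z hz hz' => hne ?_
  exact (ordConnectedComponent_eq hz).trans (ordConnectedComponent_eq hz').symm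

theorem mk_covBy_le_weight_mul_cellularity {X : Type u} [TopologicalSpace X] [T1Space X]
    {f : K → X} (hf : Continuous f) (hl : OrderLight f) :
    #{p : K × K | p.1 ⋖ p.2} ≤ weight X * cellularity K := by
  obtain ⟨B, hBcard, hB⟩ := exists_isTopologicalBasis_mk_eq_weight X
  have hsub : {p : K × K | p.1 ⋖ p.2} ⊆
      ⋃ V ∈ B, {p : K × K | p.1 ⋖ p.2 ∧ p.1 ∉ f ⁻¹' V ∧ p.2 ∈ f ⁻¹' V} := by
    rintro ⟨a, b⟩ (hab : a ⋖ b)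
    have hne : f b ≠ f a := fun h => hab.lt.ne' <| hl.eq_of_uIcc_subset <| by
      rw [uIcc_of_le hab.lt.le, hab.Icc_eq]
      rintro z (rfl | rfl)
      exacts [rfl, h]
    obtain ⟨V, hV, hbV, hVa⟩ := hB.exists_subset_of_mem_open hne isOpen_compl_singleton
    exact mem_biUnion hV ⟨hab, fun h => hVa h rfl, hbV⟩
  calc #{p : K × K | p.1 ⋖ p.2} ≤ _ := mk_le_mk_of_subset hsub
    _ ≤ #B * ⨆ V : B, #{p : K × K | p.1 ⋖ p.2 ∧ p.1 ∉ f ⁻¹' V ∧ p.2 ∈ f ⁻¹' V} :=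
      mk_biUnion_le _ _
    _ ≤ weight X * cellularity K := hBcard ▸ mul_le_mul_right
      (ciSup_le' fun V => mk_covBy_mem_le_cellularity ((hB.isOpen V.2).preimage hf)) _

theorem weight_eq_of_orderLight_of_isIrreducibleMap [CompactSpace K] {X : Type u}
    [TopologicalSpace X] [T2Space X] [Infinite X] {f : K → X} (hf : Continuous f)
    (hl : OrderLight f) (hirr : IsIrreducibleMap f) : weight K = weight X := by
  have : Infinite K := .of_surjective f hirr.1
  have hκ : ℵ₀ ≤ weight X := aleph0_le_weight
  refine le_antisymm (weight_le_of_density_le_of_mk_covBy_le hκ ?_ ?_) ?_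
  · exact (density_le_of_isIrreducibleMap hirr hf.isClosedMap).trans density_le_weight
  · calc _ ≤ weight X * cellularity K := mk_covBy_le_weight_mul_cellularity hf hl
      _ ≤ weight X * weight X := mul_le_mul_right
          ((cellularity_le_of_isIrreducibleMap hirr hf.isClosedMap).trans cellularity_le_weight) _
      _ = weight X := mul_eq_self hκ
  · exact (weight_le_max_aleph0_of_surjective hf hirr.1).trans (max_eq_right aleph0_le_weight).le

end Weight

theorem cardinal_invariants_pull_back (X : Type u) [TopologicalSpace X] [T2Space X]
    (hX : ContinuousImageOfCompactLOTS X) :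
    ∃ (K : Type u) (lo : LinearOrder K) (tK : TopologicalSpace K),
      letI := lo; letI := tK;
      OrderTopology K ∧ CompactSpace K ∧
        ∃ f : K → X, Continuous f ∧ Function.Surjective f ∧
          (∀ k : K, nhdsChar K k ≤ nhdsChar X (f k)) ∧ spaceChar K ≤ spaceChar X ∧
          cellularity K = cellularity X ∧ density K = density X ∧ weight K = weight X := by
  rcases finite_or_infinite X with hfin | hinf
  · -- a finite Hausdorff space is discrete, hence a compact LOTS for any linear order
    obtain ⟨n, ⟨e⟩⟩ := Finite.exists_equiv_fin X
    let _ : LinearOrder X := LinearOrder.lift' e e.injective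
    have := Fintype.ofFinite X
    have : LocallyFiniteOrder X := Fintype.toLocallyFiniteOrder
    exact ⟨X, _, _, inferInstance, inferInstance, id, continuous_id, surjective_id,
      fun _ => le_rfl, le_rfl, rfl, rfl, rfl⟩
  obtain ⟨L, _, _, _, _, g, hg, hgs⟩ := hX
  have : CompactSpace X := hgs.compactSpace hg
  obtain ⟨E, _, hE⟩ := exists_isIrreducibleMap_domRestrict hg hgs
  obtain ⟨K, _, _, _, q, f, hq, hqs, hf, hfq, hl⟩ :=
    exists_orderLight_factorization (hg.comp continuous_subtype_val) hE.1
  have : CompactSpace K := hqs.compactSpace hq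
  have hirr : IsIrreducibleMap f := .of_comp hq hqs (hfq ▸ hE)
  exact ⟨K, _, _, ‹_›, ‹_›, f, hf, hirr.1, nhdsChar_le_of_orderLight hf hl,
    spaceChar_le_of_forall (nhdsChar_le_of_orderLight hf hl),
    (cellularity_le_of_isIrreducibleMap hirr hf.isClosedMap).antisymm
      (cellularity_le_of_surjective hf hirr.1),
    (density_le_of_isIrreducibleMap hirr hf.isClosedMap).antisymm
      (density_le_of_surjective hf hirr.1),
    weight_eq_of_orderLight_of_isIrreducibleMap hf hl hirr⟩
end

section
/- Every ccc Hausdorff space which is a continuous image of some compact linearly ordered topological space is a continuous image of some ccc compact linearly ordered topological space. -/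
universe u

open Set Topology

/-!
Given a continuous surjection `f : K → X` from a compact LOTS, Zorn's lemma yields a closed
`E ⊆ K` that `f` still maps onto `X` and that is minimal with this property, so `f` restricted
to `E` is irreducible. As a compact subset of a LOTS, `E` carries its own order topology. An
irreducible closed map transfers the ccc backwards: a nonempty open `U ⊆ E` contains the full
preimage of the nonempty open set `X \ f(E \ U)`, so disjoint families in `E` give disjoint
families in `X`.
-/

theorem TopologicalSpace.eq_of_le_of_compactSpace_of_t2Space {X : Type*}
    {t₁ t₂ : TopologicalSpace X} [@CompactSpace X t₁] [@T2Space X t₂] (h : t₁ ≤ t₂) :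
    t₁ = t₂ := by
  refine le_antisymm h fun s hs => ?_
  have hclosed := @Continuous.isClosedMap X X t₁ t₂ _ _ id (continuous_id_of_le h) sᶜ
    (@IsOpen.isClosed_compl X t₁ s hs)
  rw [image_id] at hclosed
  exact @isClosed_compl_iff X t₂ s |>.mp hclosed

theorem orderTopology_of_compactSpace {α : Type*} [LinearOrder α] [TopologicalSpace α]
    [OrderTopology α] (s : Set α) [CompactSpace s] : OrderTopology s := by
  have : @T2Space s (Preorder.topology s) :=
    @OrderClosedTopology.to_t2Space s (Preorder.topology s) _
      (@OrderTopology.to_orderClosedTopology s (Preorder.topology s) _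
        (@OrderTopology.mk s (Preorder.topology s) _ rfl))
  exact ⟨TopologicalSpace.eq_of_le_of_compactSpace_of_t2Space
    (induced_topology_le_preorder Subtype.coe_lt_coe)⟩

theorem exists_compactSpace_isIrreducibleMap_domRestrict {K X : Type u} [TopologicalSpace K]
    [TopologicalSpace X] [CompactSpace K] [T1Space X] {f : K → X} (hf : Continuous f)
    (hsurj : Function.Surjective f) :
    ∃ E : Set K, CompactSpace E ∧ IsIrreducibleMap (E.domRestrict f) := by
  obtain ⟨E, hE, himage, hmin⟩ := exists_compact_surjective_zorn_subset hf hsurj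
  refine ⟨E, hE, fun x => ?_, fun A hA hne => hmin A hne hA⟩
  obtain ⟨k, hk, rfl⟩ := himage.symm ▸ mem_univ x
  exact ⟨⟨k, hk⟩, rfl⟩

namespace IsIrreducibleMap

variable {K X : Type*} [TopologicalSpace K] [TopologicalSpace X] {f : K → X}

theorem nonempty_compl_image_compl (hf : IsIrreducibleMap f) {U : Set K} (hU : IsOpen U)
    (hne : U.Nonempty) : (f '' Uᶜ)ᶜ.Nonempty :=
  nonempty_compl.mpr <| hf.2 Uᶜ hU.isClosed_compl (compl_ne_univ.mpr hne)

theorem ccc (hf : IsIrreducibleMap f) (hclosed : IsClosedMap f) (hX : CCC X) : CCC K := by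
  intro 𝒰 hopen hdisj
  let V : Set K → Set X := fun U => (f '' Uᶜ)ᶜ
  have hV_subset (U : Set K) : f ⁻¹' V U ⊆ U := fun k hk => not_not.mp fun h => hk ⟨k, h, rfl⟩
  have hV_disj : 𝒰.PairwiseDisjoint V := fun U₁ hU₁ U₂ hU₂ hne => by
    refine disjoint_left.mpr fun x hx₁ hx₂ => ?_
    obtain ⟨k, rfl⟩ := hf.1 x
    exact disjoint_left.mp (hdisj hU₁ hU₂ hne) (hV_subset U₁ hx₁) (hV_subset U₂ hx₂)
  have hV_ne (U) (hU : U ∈ 𝒰) : (V U).Nonempty :=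
    hf.nonempty_compl_image_compl (hopen U hU).1 (hopen U hU).2
  have hV_inj : InjOn V 𝒰 := fun U₁ hU₁ U₂ hU₂ heq =>
    let ⟨_, hx⟩ := hV_ne U₁ hU₁
    hV_disj.elim_set hU₁ hU₂ _ hx (heq ▸ hx)
  refine (mapsTo_image V 𝒰).countable_of_injOn hV_inj (hX _ ?_ ?_)
  · rintro _ ⟨U, hU, rfl⟩
    exact ⟨(hclosed _ (hopen U hU).1.isClosed_compl).isOpen_compl, hV_ne U hU⟩
  · exact hV_inj.pairwiseDisjoint_image.mpr hV_disj

end IsIrreducibleMap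

theorem image_of_ccc_compact_LOTS (X : Type u) [TopologicalSpace X] [T2Space X]
    (hccc : CCC X) (hX : ContinuousImageOfCompactLOTS X) :
    ∃ (K : Type u) (lo : LinearOrder K) (tK : TopologicalSpace K),
      letI := lo; letI := tK;
      OrderTopology K ∧ CompactSpace K ∧ CCC K ∧
        ∃ f : K → X, Continuous f ∧ Function.Surjective f := by
  obtain ⟨K, lo, tK, hOT, hK, f, hf, hsurj⟩ := hX
  obtain ⟨E, hE, hirr⟩ := exists_compactSpace_isIrreducibleMap_domRestrict hf hsurj
  have hcont : Continuous (E.domRestrict f) := hf.comp continuous_subtype_val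
  exact ⟨E, inferInstance, inferInstance, orderTopology_of_compactSpace E, hE,
    hirr.ccc hcont.isClosedMap hccc, E.domRestrict f, hcont, hirr.1⟩
end
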